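/- arXiv:0710.2266 — 2 statements merged into one kernel-verified Lean document; each statement's English description precedes it below -/
import Mathlib

section
/- With J₊, J₋ g-orthogonal complex structures on an oriented 4-dimensional inner product space inducing the given orientation, angle function p = -(1/4)trace(J₊J₋), fundamental forms F±(·,·) = g(J±·,·), Φ(·,·) = (1/2)g([J₊,J₋]·,·), and Ψ±(·,·) = -Φ(J±·,·), one has F₊ = p·F₋ + Ψ₋ and F₋ = p·F₊ - Ψ₊. -/
/-!
Two orthogonal complex structures inducing the same orientation anticommute up to a scalar,
`J₊J₋ + J₋J₊ = -2p`; from there both identities are pure algebra, the scalar being read off from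
the trace. In an orthonormal basis adapted to `J₊`, the matrix of `J₋` is `M = P J₀ Pᵀ`, where
`J₀` is the standard complex structure and `P ∈ SO(4)` is the change of basis to a `J₋`-adapted
one; so `M` is skew, `M² = -1`, and its Pfaffian is `det P > 0`. Split `M` into its self-dual and
anti-self-dual parts: `M² = -1` forces the product of their squared norms to vanish, while the
Pfaffian is a quarter of their difference. Hence the anti-self-dual part vanishes, and self-dual
skew matrices anticommute with `J₀` up to a scalar.
-/

open scoped RealInnerProductSpace

/-- A `g`-compatible complex structure `J` on an oriented `4`-dimensional real inner
product space `V` *induces the orientation* `o` if there is a positively oriented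
orthonormal basis of the form `(e, Je, f, Jf)`.  (This is the standard description of
the orientation induced by the volume form of the fundamental `2`-form
`F(·,·) = g(J·,·)`.) -/
def InducesOrientation {V : Type*} [NormedAddCommGroup V] [InnerProductSpace ℝ V]
    (o : Orientation ℝ V (Fin 4)) (J : V →ₗ[ℝ] V) : Prop :=
  ∃ b : OrthonormalBasis (Fin 4) ℝ V,
    b.toBasis.orientation = o ∧ J (b 0) = b 1 ∧ J (b 2) = b 3

namespace Matrix

def stdComplexStructure : Matrix (Fin 4) (Fin 4) ℝ :=
  !![0, -1, 0, 0; 1, 0, 0, 0; 0, 0, 0, -1; 0, 0, 1, 0]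

def skewFinFour (a b c d e f : ℝ) : Matrix (Fin 4) (Fin 4) ℝ :=
  !![0, a, b, c; -a, 0, d, e; -b, -d, 0, f; -c, -e, -f, 0]

/-- The matrix of the self-dual form `a (e⁰¹ + e²³) + b (e⁰² - e¹³) + c (e⁰³ + e¹²)`. -/
def selfDualSkew (a b c : ℝ) : Matrix (Fin 4) (Fin 4) ℝ :=
  skewFinFour a b c c (-b) a

def pfaffianFinFour (M : Matrix (Fin 4) (Fin 4) ℝ) : ℝ :=
  M 0 1 * M 2 3 - M 0 2 * M 1 3 + M 0 3 * M 1 2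

lemma det_fin_four (A : Matrix (Fin 4) (Fin 4) ℝ) : A.det =
    A 0 0 * (A 1 1 * (A 2 2 * A 3 3 - A 2 3 * A 3 2) - A 1 2 * (A 2 1 * A 3 3 - A 2 3 * A 3 1)
      + A 1 3 * (A 2 1 * A 3 2 - A 2 2 * A 3 1))
    - A 0 1 * (A 1 0 * (A 2 2 * A 3 3 - A 2 3 * A 3 2) - A 1 2 * (A 2 0 * A 3 3 - A 2 3 * A 3 0)
      + A 1 3 * (A 2 0 * A 3 2 - A 2 2 * A 3 0))
    + A 0 2 * (A 1 0 * (A 2 1 * A 3 3 - A 2 3 * A 3 1) - A 1 1 * (A 2 0 * A 3 3 - A 2 3 * A 3 0)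
      + A 1 3 * (A 2 0 * A 3 1 - A 2 1 * A 3 0))
    - A 0 3 * (A 1 0 * (A 2 1 * A 3 2 - A 2 2 * A 3 1) - A 1 1 * (A 2 0 * A 3 2 - A 2 2 * A 3 0)
      + A 1 2 * (A 2 0 * A 3 1 - A 2 1 * A 3 0)) := by
  rw [det_succ_row_zero]
  simp only [Nat.succ_eq_add_one, Nat.reduceAdd, Fin.isValue, det_fin_three, submatrix_apply,
    Fin.succ_zero_eq_one, Fin.succAbove, Fin.castSucc_zero, Fin.succ_one_eq_two, Fin.castSucc_one,
    Fin.reduceSucc, Fin.reduceCastSucc, Fin.sum_univ_succ, Fin.coe_ofNat_eq_mod, Nat.zero_mod,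
    pow_zero, one_mul, lt_self_iff_false, ↓reduceIte, not_lt_zero, Fin.val_succ, Fin.succ_pos,
    zero_add, pow_one, neg_mul, Fin.lt_one_iff, Fin.reduceEq, even_two, Even.neg_pow, one_pow,
    Fin.reduceLT, Finset.univ_unique, Fin.default_eq_zero, Fin.val_eq_zero, Finset.sum_singleton]
  ring

lemma stdComplexStructure_transpose : stdComplexStructureᵀ = -stdComplexStructure := by
  ext i j; fin_cases i <;> fin_cases j <;> simp [stdComplexStructure]

lemma stdComplexStructure_mul_self : stdComplexStructure * stdComplexStructure = -1 := by
  ext i j; fin_cases i <;> fin_cases j <;> simp [stdComplexStructure, mul_apply, Fin.sum_univ_four]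

lemma pfaffianFinFour_mul_stdComplexStructure_mul_transpose (P : Matrix (Fin 4) (Fin 4) ℝ) :
    pfaffianFinFour (P * stdComplexStructure * Pᵀ) = P.det := by
  simp only [pfaffianFinFour, stdComplexStructure, det_fin_four, Fin.isValue, mul_apply, of_apply,
    cons_val', cons_val_fin_one, Fin.sum_univ_four, cons_val_zero, cons_val_one, cons_val,
    transpose_apply, mul_zero, mul_one, zero_add, add_zero, mul_neg, neg_mul]
  ring

lemma stdComplexStructure_mul_add_mul_selfDualSkew (a b c : ℝ) :
    stdComplexStructure * selfDualSkew a b c + selfDualSkew a b c * stdComplexStructure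
      = (2 * a) • 1 := by
  ext i j
  fin_cases i <;> fin_cases j <;> simp [stdComplexStructure, selfDualSkew, skewFinFour] <;> ring

lemma eq_skewFinFour_of_transpose_eq_neg {M : Matrix (Fin 4) (Fin 4) ℝ} (hskew : Mᵀ = -M) :
    M = skewFinFour (M 0 1) (M 0 2) (M 0 3) (M 1 2) (M 1 3) (M 2 3) := by
  have hs : ∀ i j, M j i = -M i j := fun i j => by simpa using congrFun₂ hskew i j
  have hd : ∀ i, M i i = 0 := fun i => by linarith [hs i i]
  ext i j
  fin_cases i <;> fin_cases j <;>
    simp [skewFinFour, hd, hs 0 1, hs 0 2, hs 0 3, hs 1 2, hs 1 3, hs 2 3]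

lemma selfDualNormSq_mul_antiSelfDualNormSq_eq_zero {a b c d e f : ℝ}
    (hsq : skewFinFour a b c d e f * skewFinFour a b c d e f = -1) :
    ((a + f) ^ 2 + (b - e) ^ 2 + (c + d) ^ 2) * ((a - f) ^ 2 + (b + e) ^ 2 + (c - d) ^ 2) = 0 := by
  have E := fun i j => congrFun₂ hsq i j
  simp only [skewFinFour, mul_apply, Fin.sum_univ_four, Fin.forall_fin_succ, Fin.isValue, of_apply,
    cons_val', cons_val_zero, cons_val_fin_one, cons_val_one, cons_val, cons_val_succ,
    Fin.succ_zero_eq_one, Fin.succ_one_eq_two, Fin.reduceSucc, Fin.reduceEq, neg_apply,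
    one_apply_eq, one_apply_ne, ne_eq, zero_ne_one, Fin.succ_ne_zero, not_false_eq_true,
    mul_zero, zero_mul, mul_neg, neg_mul, neg_neg, neg_zero, zero_add, add_zero,
    IsEmpty.forall_iff, and_true] at E
  obtain ⟨⟨e00, e01, e02, e03⟩, ⟨-, e11, e12, e13⟩, ⟨-, -, e22, e23⟩, -, -, -, e33⟩ := E
  -- every coefficient of the one part times every coefficient of the other vanishes
  have z11 : (a + f) * (a - f) = 0 := by linear_combination (e22 + e33 - e00 - e11) / 2
  have z22 : (b - e) * (b + e) = 0 := by linear_combination (e11 + e33 - e00 - e22) / 2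
  have z33 : (c + d) * (c - d) = 0 := by linear_combination (e11 + e22 - e00 - e33) / 2
  have z12 : (a + f) * (b + e) = 0 := by linear_combination -e12 + e03
  have z13 : (a + f) * (c - d) = 0 := by linear_combination -e13 - e02
  have z21 : (b - e) * (a - f) = 0 := by linear_combination -e12 - e03
  have z23 : (b - e) * (c - d) = 0 := by linear_combination -e23 + e01
  have z31 : (c + d) * (a - f) = 0 := by linear_combination -e13 + e02
  have z32 : (c + d) * (b + e) = 0 := by linear_combination -e23 - e01
  linear_combination ((a + f) * (a - f)) * z11 + ((a + f) * (b + e)) * z12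
    + ((a + f) * (c - d)) * z13 + ((b - e) * (a - f)) * z21 + ((b - e) * (b + e)) * z22
    + ((b - e) * (c - d)) * z23 + ((c + d) * (a - f)) * z31 + ((c + d) * (b + e)) * z32
    + ((c + d) * (c - d)) * z33

lemma skewFinFour_selfDual_of_mul_self_eq_neg_one {a b c d e f : ℝ}
    (hsq : skewFinFour a b c d e f * skewFinFour a b c d e f = -1)
    (hpf : 0 < a * f - b * e + c * d) : f = a ∧ e = -b ∧ d = c := by
  have hST := selfDualNormSq_mul_antiSelfDualNormSq_eq_zero hsq
  set S := (a + f) ^ 2 + (b - e) ^ 2 + (c + d) ^ 2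
  set T := (a - f) ^ 2 + (b + e) ^ 2 + (c - d) ^ 2
  have hT : T = 0 := by
    -- the Pfaffian is `(S - T) / 4`
    have hT_lt_S : T < S := by linear_combination 4 * hpf
    rcases mul_eq_zero.mp hST with hS | hT
    · linarith [show 0 ≤ T by positivity]
    · exact hT
  have h1 : (a - f) ^ 2 = 0 := by linarith [sq_nonneg (a - f), sq_nonneg (b + e), sq_nonneg (c - d)]
  have h2 : (b + e) ^ 2 = 0 := by linarith [sq_nonneg (a - f), sq_nonneg (b + e), sq_nonneg (c - d)]
  have h3 : (c - d) ^ 2 = 0 := by linarith [sq_nonneg (a - f), sq_nonneg (b + e), sq_nonneg (c - d)]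
  refine ⟨?_, ?_, ?_⟩
  · linarith [pow_eq_zero_iff two_ne_zero |>.mp h1]
  · linarith [pow_eq_zero_iff two_ne_zero |>.mp h2]
  · linarith [pow_eq_zero_iff two_ne_zero |>.mp h3]

lemma exists_eq_selfDualSkew_of_mul_self_eq_neg_one {M : Matrix (Fin 4) (Fin 4) ℝ}
    (hskew : Mᵀ = -M) (hsq : M * M = -1) (hpf : 0 < pfaffianFinFour M) :
    ∃ a b c, M = selfDualSkew a b c := by
  rw [eq_skewFinFour_of_transpose_eq_neg hskew] at hsq ⊢
  obtain ⟨hf, he, hd⟩ := skewFinFour_selfDual_of_mul_self_eq_neg_one hsq hpf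
  exact ⟨M 0 1, M 0 2, M 0 3, by rw [selfDualSkew, hf, he, hd]⟩

lemma exists_stdComplexStructure_anticomm_conj_eq_smul_one {P : Matrix (Fin 4) (Fin 4) ℝ}
    (hP : P ∈ orthogonalGroup (Fin 4) ℝ) (hdet : 0 < P.det) :
    ∃ k : ℝ, stdComplexStructure * (P * stdComplexStructure * Pᵀ)
      + P * stdComplexStructure * Pᵀ * stdComplexStructure = k • 1 := by
  set M := P * stdComplexStructure * Pᵀ
  have hskew : Mᵀ = -M := by
    simp [M, transpose_mul, stdComplexStructure_transpose, Matrix.mul_assoc]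
  have hsq : M * M = -1 := by
    calc M * M = P * stdComplexStructure * (Pᵀ * P) * stdComplexStructure * Pᵀ := by
          simp only [M, Matrix.mul_assoc]
      _ = -(P * Pᵀ) := by
          rw [(mem_orthogonalGroup_iff' (Fin 4) ℝ).mp hP, Matrix.mul_one, Matrix.mul_assoc P,
            stdComplexStructure_mul_self]
          simp
      _ = -1 := by rw [(mem_orthogonalGroup_iff (Fin 4) ℝ).mp hP]
  have hpf : 0 < pfaffianFinFour M := by
    rwa [pfaffianFinFour_mul_stdComplexStructure_mul_transpose]
  obtain ⟨a, b, c, hM⟩ := exists_eq_selfDualSkew_of_mul_self_eq_neg_one hskew hsq hpf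
  exact ⟨2 * a, by rw [hM]; exact stdComplexStructure_mul_add_mul_selfDualSkew a b c⟩

end Matrix

section Anticommutator

variable {R M : Type*} [Field R] [NeZero (2 : R)] [AddCommGroup M] [Module R M]
  {J K : M →ₗ[R] M} {p : R}

lemma LinearMap.apply_eq_of_anticomm_eq_smul_id (hK : K ∘ₗ K = -LinearMap.id)
    (h : J ∘ₗ K + K ∘ₗ J = (-2 * p) • LinearMap.id) (x : M) :
    J x = p • K x - (1 / 2 : R) • (J ∘ₗ K - K ∘ₗ J) (K x) := by
  have hKK : K (K x) = -x := by simpa using LinearMap.congr_fun hK x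
  have hKJK : K (J (K x)) = J x + (-2 * p) • K x := by
    have := LinearMap.congr_fun h (K x)
    simp only [LinearMap.add_apply, LinearMap.comp_apply, LinearMap.smul_apply,
      LinearMap.id_apply, hKK, map_neg] at this
    rw [← this]; abel
  rw [LinearMap.sub_apply, LinearMap.comp_apply, LinearMap.comp_apply, hKK, map_neg, hKJK]
  match_scalars <;> field_simp <;> ring

lemma LinearMap.apply_eq_of_anticomm_eq_smul_id' (hJ : J ∘ₗ J = -LinearMap.id)
    (h : J ∘ₗ K + K ∘ₗ J = (-2 * p) • LinearMap.id) (x : M) :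
    K x = p • J x + (1 / 2 : R) • (J ∘ₗ K - K ∘ₗ J) (J x) := by
  rw [LinearMap.apply_eq_of_anticomm_eq_smul_id hJ ((add_comm _ _).trans h) x,
    ← neg_sub (J ∘ₗ K), LinearMap.neg_apply, smul_neg, sub_neg_eq_add]

end Anticommutator

lemma LinearMap.two_mul_trace_comp_eq_of_anticomm_eq_smul_id {R M : Type*} [CommRing R]
    [AddCommGroup M] [Module R M] [Module.Free R M] [Module.Finite R M] {J K : M →ₗ[R] M} {k : R}
    (h : J ∘ₗ K + K ∘ₗ J = k • LinearMap.id) :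
    2 * LinearMap.trace R M (J ∘ₗ K) = k * Module.finrank R M := by
  have := congrArg (LinearMap.trace R M) h
  rwa [map_add, LinearMap.trace_comp_comm' J K, ← two_mul, map_smul, LinearMap.trace_id,
    smul_eq_mul] at this

open Matrix in
lemma LinearMap.toMatrix_eq_stdComplexStructure {V : Type*} [AddCommGroup V] [Module ℝ V]
    {J : V →ₗ[ℝ] V} (hJ : J ∘ₗ J = -LinearMap.id) {b : Module.Basis (Fin 4) ℝ V}
    (h0 : J (b 0) = b 1) (h2 : J (b 2) = b 3) :
    LinearMap.toMatrix b b J = stdComplexStructure := by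
  have hJJ : ∀ v, J (J v) = -v := fun v => by simpa using LinearMap.congr_fun hJ v
  have h1 : J (b 1) = -b 0 := by rw [← h0, hJJ]
  have h3 : J (b 3) = -b 2 := by rw [← h2, hJJ]
  ext i j
  rw [LinearMap.toMatrix_apply]
  fin_cases i <;> fin_cases j <;> simp [h0, h1, h2, h3, stdComplexStructure]

open Matrix in
lemma OrthonormalBasis.toMatrix_toBasis_eq_transpose {V ι : Type*} [NormedAddCommGroup V]
    [InnerProductSpace ℝ V] [Fintype ι] [DecidableEq ι] (b c : OrthonormalBasis ι ℝ V) :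
    c.toBasis.toMatrix b.toBasis = (b.toBasis.toMatrix c.toBasis)ᵀ := by
  ext i j
  simp [Module.Basis.toMatrix_apply, OrthonormalBasis.repr_apply_apply, real_inner_comm]

open Matrix in
theorem exists_anticomm_eq_smul_id_of_inducesOrientation {V : Type*} [NormedAddCommGroup V]
    [InnerProductSpace ℝ V] {o : Orientation ℝ V (Fin 4)} {Jp Jm : V →ₗ[ℝ] V}
    (hJp : Jp ∘ₗ Jp = -LinearMap.id) (hJm : Jm ∘ₗ Jm = -LinearMap.id)
    (hJpo : InducesOrientation o Jp) (hJmo : InducesOrientation o Jm) :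
    ∃ k : ℝ, Jp ∘ₗ Jm + Jm ∘ₗ Jp = k • LinearMap.id := by
  obtain ⟨b, hbo, hb0, hb2⟩ := hJpo
  obtain ⟨c, hco, hc0, hc2⟩ := hJmo
  set P := b.toBasis.toMatrix c.toBasis
  have hP : P ∈ orthogonalGroup (Fin 4) ℝ := b.toMatrix_orthonormalBasis_mem_orthogonal c
  have hdet : 0 < P.det := (Module.Basis.orientation_eq_iff_det_pos _ _).mp (hbo.trans hco.symm)
  have hJp_b : LinearMap.toMatrix b.toBasis b.toBasis Jp = stdComplexStructure :=
    LinearMap.toMatrix_eq_stdComplexStructure hJp (by simpa) (by simpa)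
  have hJm_b : LinearMap.toMatrix b.toBasis b.toBasis Jm = P * stdComplexStructure * Pᵀ := by
    rw [← basis_toMatrix_mul_linearMap_toMatrix_mul_basis_toMatrix b.toBasis c.toBasis b.toBasis
        c.toBasis, LinearMap.toMatrix_eq_stdComplexStructure hJm (by simpa) (by simpa),
      OrthonormalBasis.toMatrix_toBasis_eq_transpose b c]
  obtain ⟨k, hk⟩ := exists_stdComplexStructure_anticomm_conj_eq_smul_one hP hdet
  refine ⟨k, (LinearMap.toMatrix b.toBasis b.toBasis).injective ?_⟩
  have hcomp := LinearMap.toMatrix_comp b.toBasis b.toBasis b.toBasis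
  rw [map_add, hcomp, hcomp, hJp_b, hJm_b, map_smul, LinearMap.toMatrix_id]
  exact hk

theorem stmt3_general {V : Type*} [NormedAddCommGroup V] [InnerProductSpace ℝ V]
    (hdim : Module.finrank ℝ V = 4) (o : Orientation ℝ V (Fin 4))
    (Jp Jm : V →ₗ[ℝ] V)
    (hJpsq : Jp ∘ₗ Jp = -LinearMap.id) (hJmsq : Jm ∘ₗ Jm = -LinearMap.id)
    (hJpo : InducesOrientation o Jp) (hJmo : InducesOrientation o Jm)
    (p : ℝ) (hp : p = -(1/4) * LinearMap.trace ℝ V (Jp ∘ₗ Jm))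
    (Fp Fm Φ Ψp Ψm : V → V → ℝ)
    (hFp : ∀ x y, Fp x y = ⟪Jp x, y⟫) (hFm : ∀ x y, Fm x y = ⟪Jm x, y⟫)
    (hΦ : ∀ x y, Φ x y = (1/2) * ⟪(Jp ∘ₗ Jm - Jm ∘ₗ Jp) x, y⟫)
    (hΨp : ∀ x y, Ψp x y = -Φ (Jp x) y) (hΨm : ∀ x y, Ψm x y = -Φ (Jm x) y) :
    ∀ x y : V, Fp x y = p * Fm x y + Ψm x y ∧ Fm x y = p * Fp x y - Ψp x y := by
  have : FiniteDimensional ℝ V := Module.finite_of_finrank_eq_succ hdim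
  obtain ⟨k, hk⟩ := exists_anticomm_eq_smul_id_of_inducesOrientation hJpsq hJmsq hJpo hJmo
  have htr := LinearMap.two_mul_trace_comp_eq_of_anticomm_eq_smul_id hk
  rw [hdim] at htr
  have hkp : k = -2 * p := by rw [hp]; push_cast at htr; linarith
  rw [hkp] at hk
  intro x y
  constructor
  · rw [hFp, hFm, hΨm, hΦ, LinearMap.apply_eq_of_anticomm_eq_smul_id hJmsq hk x, inner_sub_left,
      real_inner_smul_left, real_inner_smul_left]
    ring
  · rw [hFm, hFp, hΨp, hΦ, LinearMap.apply_eq_of_anticomm_eq_smul_id' hJpsq hk x, inner_add_left,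
      real_inner_smul_left, real_inner_smul_left]
    ring

/-- With fundamental forms `F±(·,·) = g(J±·,·)`, `Φ(·,·) = (1/2)g([J₊,J₋]·,·)` and
`Ψ±(·,·) = -Φ(J±·,·)`, and the angle function `p = -(1/4)trace(J₊J₋)`, one has
`F₊ = p·F₋ + Ψ₋` and `F₋ = p·F₊ - Ψ₊`. -/
theorem stmt3 {V : Type*} [NormedAddCommGroup V] [InnerProductSpace ℝ V]
    (hdim : Module.finrank ℝ V = 4) (o : Orientation ℝ V (Fin 4))
    (Jp Jm : V →ₗ[ℝ] V)
    (hJpsq : Jp ∘ₗ Jp = -LinearMap.id) (hJmsq : Jm ∘ₗ Jm = -LinearMap.id)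
    (hJpg : ∀ x y : V, ⟪Jp x, Jp y⟫ = ⟪x, y⟫)
    (hJmg : ∀ x y : V, ⟪Jm x, Jm y⟫ = ⟪x, y⟫)
    (hJpo : InducesOrientation o Jp) (hJmo : InducesOrientation o Jm)
    (p : ℝ) (hp : p = -(1/4) * LinearMap.trace ℝ V (Jp ∘ₗ Jm))
    (Fp Fm Φ Ψp Ψm : V → V → ℝ)
    (hFp : ∀ x y, Fp x y = ⟪Jp x, y⟫) (hFm : ∀ x y, Fm x y = ⟪Jm x, y⟫)
    (hΦ : ∀ x y, Φ x y = (1/2) * ⟪(Jp ∘ₗ Jm - Jm ∘ₗ Jp) x, y⟫)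
    (hΨp : ∀ x y, Ψp x y = -Φ (Jp x) y) (hΨm : ∀ x y, Ψm x y = -Φ (Jm x) y) :
    ∀ x y : V, Fp x y = p * Fm x y + Ψm x y ∧ Fm x y = p * Fp x y - Ψp x y :=
  stmt3_general hdim o Jp Jm hJpsq hJmsq hJpo hJmo p hp Fp Fm Φ Ψp Ψm hFp hFm hΦ hΨp hΨm
end

section
/- With the setup of g-orthogonal complex structures J₊, J₋ on an oriented 4-dimensional inner product space with angle function p, the 2-forms Φ(·,·) = (1/2)g([J₊,J₋]·,·) and Ψ±(·,·) = -Φ(J±·,·) satisfy Φ∧Φ = Ψ₊∧Ψ₊ = Ψ₋∧Ψ₋ = 2(1-p²)·vol_g, Φ∧Ψ± = 0, and Ψ₊∧Ψ₋ = p·Φ∧Φ. -/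
open scoped RealInnerProductSpace

/-- The evaluation of the wedge product `α ∧ β` of two `2`-forms (given as antisymmetric
bilinear maps) on a quadruple of vectors, via the standard `(2,2)`-shuffle formula.
Evaluated on a positively oriented orthonormal basis, this is the coefficient of
`α ∧ β` with respect to the metric volume form `dv_g`. -/
def wedgeEval {V : Type*} (α β : V → V → ℝ) (v₀ v₁ v₂ v₃ : V) : ℝ :=
  α v₀ v₁ * β v₂ v₃ - α v₀ v₂ * β v₁ v₃ + α v₀ v₃ * β v₁ v₂
    + α v₁ v₂ * β v₀ v₃ - α v₁ v₃ * β v₀ v₂ + α v₂ v₃ * β v₀ v₁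

/-!
In a positively oriented orthonormal basis, a compatible complex structure inducing the
orientation has matrix `M u = selfDualMatrix u` for a unit vector `u ∈ ℝ³`: it is conjugate to the
standard one of `(e, Je, f, Jf)` by a matrix of `SO(4)`, hence skew, orthogonal and of Pfaffian
`1`, and these three conditions force the self-dual shape. Self-dual matrices multiply like
imaginary quaternions, `M u * M v = -(u ⬝ v) + M (v × u)`, and `M u ∧ M v = 2 (u ⬝ v) vol`. With
`J₊ = M a`, `J₋ = M g` and `c = a × g` this gives `p = a ⬝ g`, `Φ = M c`, `Ψ₊ = M (c × a)` and
`Ψ₋ = M (c × g)`, and every identity reduces to the Binet–Cauchy formula for cross products.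
-/

open Matrix

section SelfDual

variable {R : Type*} [CommRing R]

/-- The matrix of the self-dual 2-form `u₀ (e⁰¹ + e²³) + u₁ (e⁰² - e¹³) + u₂ (e⁰³ + e¹²)`. -/
def selfDualMatrix (u : Fin 3 → R) : Matrix (Fin 4) (Fin 4) R :=
  !![0, u 0, u 1, u 2; -u 0, 0, u 2, -u 1; -u 1, -u 2, 0, u 0; -u 2, u 1, -u 0, 0]

def pfaffian4 (A : Matrix (Fin 4) (Fin 4) R) : R :=
  A 0 1 * A 2 3 - A 0 2 * A 1 3 + A 0 3 * A 1 2

theorem selfDualMatrix_neg (u : Fin 3 → R) : selfDualMatrix (-u) = -selfDualMatrix u := by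
  ext i j; fin_cases i <;> fin_cases j <;> simp [selfDualMatrix]

theorem selfDualMatrix_transpose (u : Fin 3 → R) : (selfDualMatrix u)ᵀ = -selfDualMatrix u := by
  ext i j; fin_cases i <;> fin_cases j <;> simp [selfDualMatrix]

theorem selfDualMatrix_apply_swap (u : Fin 3 → R) (i j : Fin 4) :
    selfDualMatrix u j i = -selfDualMatrix u i j := by
  rw [← transpose_apply (selfDualMatrix u), selfDualMatrix_transpose, neg_apply]

theorem selfDualMatrix_zero : selfDualMatrix (0 : Fin 3 → R) = 0 := by
  ext i j; fin_cases i <;> fin_cases j <;> simp [selfDualMatrix]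

theorem selfDualMatrix_mul (u v : Fin 3 → R) :
    selfDualMatrix u * selfDualMatrix v = -(u ⬝ᵥ v) • 1 + selfDualMatrix (v ⨯₃ u) := by
  ext i j
  fin_cases i <;> fin_cases j <;>
    simp [selfDualMatrix, mul_apply, Fin.sum_univ_four, cross_apply, dotProduct,
      Fin.sum_univ_three] <;> ring

theorem selfDualMatrix_mul_sub_mul (u v : Fin 3 → R) :
    selfDualMatrix u * selfDualMatrix v - selfDualMatrix v * selfDualMatrix u =
      (2 : R) • selfDualMatrix (v ⨯₃ u) := by
  rw [selfDualMatrix_mul, selfDualMatrix_mul, dotProduct_comm, ← cross_anticomm v u,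
    selfDualMatrix_neg, two_smul]
  abel

theorem selfDualMatrix_mul_of_dotProduct_eq_zero {u v : Fin 3 → R} (h : u ⬝ᵥ v = 0) :
    selfDualMatrix u * selfDualMatrix v = selfDualMatrix (v ⨯₃ u) := by
  rw [selfDualMatrix_mul, h, neg_zero, zero_smul, zero_add]

theorem trace_selfDualMatrix_mul (u v : Fin 3 → R) :
    (selfDualMatrix u * selfDualMatrix v).trace = -4 * (u ⬝ᵥ v) := by
  rw [selfDualMatrix_mul]
  simp [selfDualMatrix, trace, Fin.sum_univ_four]
  ring

theorem pfaffian4_selfDualMatrix (u : Fin 3 → R) : pfaffian4 (selfDualMatrix u) = u ⬝ᵥ u := by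
  simp [pfaffian4, selfDualMatrix, dotProduct, Fin.sum_univ_three]

theorem pfaffian4_transpose_mul_mul [NoZeroDivisors R] [CharZero R]
    (P M : Matrix (Fin 4) (Fin 4) R) (hM : Mᵀ = -M) :
    pfaffian4 (Pᵀ * M * P) = P.det * pfaffian4 M := by
  have h : ∀ i j, M j i = -M i j := fun i j => by
    simpa using congrFun (congrFun hM i) j
  have hd : ∀ i, M i i = 0 := fun i => self_eq_neg.mp (h i i)
  rw [det_succ_row_zero]
  simp only [Fin.sum_univ_four, det_fin_three, submatrix_apply, pfaffian4, mul_apply,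
    transpose_apply]
  simp only [h 0 1, h 0 2, h 0 3, h 1 2, h 1 3, h 2 3, hd]
  simp [Fin.succAbove, Fin.lt_def]
  ring

end SelfDual

theorem wedgeEval_selfDualMatrix (u v : Fin 3 → ℝ) :
    wedgeEval (selfDualMatrix u) (selfDualMatrix v) 0 1 2 3 = 2 * (u ⬝ᵥ v) := by
  simp [wedgeEval, selfDualMatrix, dotProduct, Fin.sum_univ_three]
  ring

theorem wedgeEval_eq_of_selfDualMatrix {V : Type*} {α β : V → V → ℝ} {b : Fin 4 → V}
    {u v : Fin 3 → ℝ} (hα : (fun i j => α (b i) (b j)) = selfDualMatrix u)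
    (hβ : (fun i j => β (b i) (b j)) = selfDualMatrix v) :
    wedgeEval α β (b 0) (b 1) (b 2) (b 3) = 2 * (u ⬝ᵥ v) := by
  change wedgeEval (fun i j => α (b i) (b j)) (fun i j => β (b i) (b j)) 0 1 2 3 = _
  rw [hα, hβ, wedgeEval_selfDualMatrix]

theorem exists_eq_selfDualMatrix (A : Matrix (Fin 4) (Fin 4) ℝ) (hskew : Aᵀ = -A)
    (horth : Aᵀ * A = 1) (hpf : pfaffian4 A = 1) :
    ∃ u : Fin 3 → ℝ, u ⬝ᵥ u = 1 ∧ A = selfDualMatrix u := by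
  have h : ∀ i j, A j i = -A i j := fun i j => by
    simpa using congrFun (congrFun hskew i) j
  have hd : ∀ i, A i i = 0 := fun i => self_eq_neg.mp (h i i)
  -- `pfaffian4 A = x ⬝ y` and the squared entries of `A` sum to `4 = 2 (x ⬝ x + y ⬝ y)`: `x = y`.
  set x : Fin 3 → ℝ := ![A 0 1, A 0 2, A 0 3]
  set y : Fin 3 → ℝ := ![A 2 3, -A 1 3, A 1 2]
  have hx_dot_y : x ⬝ᵥ y = 1 := by
    simp [x, y, pfaffian4, dotProduct, Fin.sum_univ_three] at hpf ⊢; linarith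
  have hnorm : x ⬝ᵥ x + y ⬝ᵥ y = 2 := by
    have := congrArg trace horth
    simp [trace, mul_apply, Fin.sum_univ_four, h 0 1, h 0 2, h 0 3, h 1 2, h 1 3, h 2 3, hd]
      at this
    simp [x, y, dotProduct, Fin.sum_univ_three]
    linarith
  have hx_eq_y : x = y := by
    rw [← sub_eq_zero, ← dotProduct_self_eq_zero]
    simp only [sub_dotProduct, dotProduct_sub, dotProduct_comm y x]
    linarith
  refine ⟨x, by rw [hx_eq_y] at hnorm ⊢; linarith, ?_⟩
  have h23 : A 2 3 = A 0 1 := by simpa [x, y] using (congrFun hx_eq_y 0).symm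
  have h13 : A 1 3 = -A 0 2 := by
    have := congrFun hx_eq_y 1; simp [x, y] at this; linarith
  have h12 : A 1 2 = A 0 3 := by simpa [x, y] using (congrFun hx_eq_y 2).symm
  ext i j
  fin_cases i <;> fin_cases j <;>
    simp [selfDualMatrix, x, hd, h 0 1, h 0 2, h 0 3, h 1 2, h 1 3, h 2 3, h23, h13, h12]

theorem exists_transpose_mul_selfDualMatrix_mul {P : Matrix (Fin 4) (Fin 4) ℝ}
    (hP : P ∈ specialOrthogonalGroup (Fin 4) ℝ) {v : Fin 3 → ℝ} (hv : v ⬝ᵥ v = 1) :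
    ∃ u : Fin 3 → ℝ, u ⬝ᵥ u = 1 ∧ Pᵀ * selfDualMatrix v * P = selfDualMatrix u := by
  obtain ⟨hPo, hdet⟩ := mem_specialOrthogonalGroup_iff.mp hP
  have hPPt : P * Pᵀ = 1 := (mem_orthogonalGroup_iff (Fin 4) ℝ).mp hPo
  have hPtP : Pᵀ * P = 1 := (mem_orthogonalGroup_iff' (Fin 4) ℝ).mp hPo
  have hskew := selfDualMatrix_transpose v
  have horth : (selfDualMatrix v)ᵀ * selfDualMatrix v = 1 := by
    rw [hskew, neg_mul, selfDualMatrix_mul, cross_self, selfDualMatrix_zero, hv]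
    simp
  apply exists_eq_selfDualMatrix
  · simp [transpose_mul, hskew, Matrix.mul_assoc]
  · calc (Pᵀ * selfDualMatrix v * P)ᵀ * (Pᵀ * selfDualMatrix v * P)
        = Pᵀ * ((selfDualMatrix v)ᵀ * (P * Pᵀ) * selfDualMatrix v) * P := by
          simp only [transpose_mul, transpose_transpose, Matrix.mul_assoc]
      _ = 1 := by rw [hPPt, Matrix.mul_one, horth, Matrix.mul_one, hPtP]
  · rw [pfaffian4_transpose_mul_mul _ _ hskew, hdet, pfaffian4_selfDualMatrix, hv, one_mul]

section Basis

variable {R M : Type*} [CommRing R] [AddCommGroup M] [Module R M] (b : Module.Basis (Fin 4) R M)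
  {S T : M →ₗ[R] M} {u v : Fin 3 → R}

theorem trace_comp_of_toMatrix_eq_selfDualMatrix (hS : LinearMap.toMatrix b b S = selfDualMatrix u)
    (hT : LinearMap.toMatrix b b T = selfDualMatrix v) :
    LinearMap.trace R M (S ∘ₗ T) = -4 * (u ⬝ᵥ v) := by
  rw [LinearMap.trace_eq_matrix_trace R b, LinearMap.toMatrix_comp b b b, hS, hT,
    trace_selfDualMatrix_mul]

theorem toMatrix_commutator_of_toMatrix_eq_selfDualMatrix
    (hS : LinearMap.toMatrix b b S = selfDualMatrix u)
    (hT : LinearMap.toMatrix b b T = selfDualMatrix v) :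
    LinearMap.toMatrix b b (S ∘ₗ T - T ∘ₗ S) = (2 : R) • selfDualMatrix (v ⨯₃ u) := by
  rw [map_sub, LinearMap.toMatrix_comp b b b, LinearMap.toMatrix_comp b b b, hS, hT,
    selfDualMatrix_mul_sub_mul]

end Basis

section InnerProductSpace

variable {V : Type*} [NormedAddCommGroup V] [InnerProductSpace ℝ V]

theorem OrthonormalBasis.inner_map_eq_toMatrix {ι : Type*} [Fintype ι] [DecidableEq ι]
    (b : OrthonormalBasis ι ℝ V) (T : V →ₗ[ℝ] V) (i j : ι) :
    ⟪T (b i), b j⟫ = LinearMap.toMatrix b.toBasis b.toBasis T j i := by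
  rw [LinearMap.toMatrix_apply, OrthonormalBasis.coe_toBasis_repr_apply,
    OrthonormalBasis.repr_apply_apply, OrthonormalBasis.coe_toBasis, real_inner_comm]

theorem OrthonormalBasis.toMatrix_eq_transpose {ι : Type*} [Fintype ι] [DecidableEq ι]
    (a b : OrthonormalBasis ι ℝ V) : b.toBasis.toMatrix a = (a.toBasis.toMatrix b)ᵀ := by
  ext i j
  simp [Module.Basis.toMatrix_apply, OrthonormalBasis.repr_apply_apply, real_inner_comm]

theorem toMatrix_eq_selfDualMatrix_of_apply_eq {J : V →ₗ[ℝ] V} (hJsq : J ∘ₗ J = -LinearMap.id)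
    {e : OrthonormalBasis (Fin 4) ℝ V} (h01 : J (e 0) = e 1) (h23 : J (e 2) = e 3) :
    LinearMap.toMatrix e.toBasis e.toBasis J = selfDualMatrix ![-1, 0, 0] := by
  have hsq : ∀ x, J (J x) = -x := fun x => by simpa using LinearMap.congr_fun hJsq x
  have h10 : J (e 1) = -e 0 := by rw [← h01, hsq]
  have h32 : J (e 3) = -e 2 := by rw [← h23, hsq]
  ext i j
  rw [← e.inner_map_eq_toMatrix]
  fin_cases i <;> fin_cases j <;>
    simp [h01, h10, h23, h32, selfDualMatrix, orthonormal_iff_ite.mp e.orthonormal]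

theorem InducesOrientation.exists_toMatrix_eq_selfDualMatrix {o : Orientation ℝ V (Fin 4)}
    {J : V →ₗ[ℝ] V} (hJo : InducesOrientation o J) (hJsq : J ∘ₗ J = -LinearMap.id)
    (b : OrthonormalBasis (Fin 4) ℝ V) (hb : b.toBasis.orientation = o) :
    ∃ u : Fin 3 → ℝ, u ⬝ᵥ u = 1 ∧ LinearMap.toMatrix b.toBasis b.toBasis J = selfDualMatrix u := by
  obtain ⟨e, he, h01, h23⟩ := hJo
  have hP : e.toBasis.toMatrix b ∈ specialOrthogonalGroup (Fin 4) ℝ := by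
    refine mem_specialOrthogonalGroup_iff.mpr ⟨e.toMatrix_orthonormalBasis_mem_orthogonal b, ?_⟩
    rw [← Module.Basis.det_apply]
    exact e.det_to_matrix_orthonormalBasis_of_same_orientation b (he.trans hb.symm)
  rw [← basis_toMatrix_mul_linearMap_toMatrix_mul_basis_toMatrix b.toBasis e.toBasis b.toBasis
    e.toBasis, toMatrix_eq_selfDualMatrix_of_apply_eq hJsq h01 h23, OrthonormalBasis.coe_toBasis,
    OrthonormalBasis.coe_toBasis, OrthonormalBasis.toMatrix_eq_transpose]
  exact exists_transpose_mul_selfDualMatrix_mul hP (by simp [dotProduct, Fin.sum_univ_three])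

theorem OrthonormalBasis.form_eq_selfDualMatrix (b : OrthonormalBasis (Fin 4) ℝ V)
    {T : V →ₗ[ℝ] V} {β : V → V → ℝ} {w : Fin 3 → ℝ} (hβ : ∀ x y, β x y = -⟪T x, y⟫)
    (hT : LinearMap.toMatrix b.toBasis b.toBasis T = selfDualMatrix w) :
    (fun i j => β (b i) (b j)) = selfDualMatrix w := by
  ext i j
  rw [hβ, b.inner_map_eq_toMatrix, hT, selfDualMatrix_apply_swap, neg_neg]

theorem OrthonormalBasis.form_commutator_eq_selfDualMatrix (b : OrthonormalBasis (Fin 4) ℝ V)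
    {S T : V →ₗ[ℝ] V} {u v : Fin 3 → ℝ}
    (hS : LinearMap.toMatrix b.toBasis b.toBasis S = selfDualMatrix u)
    (hT : LinearMap.toMatrix b.toBasis b.toBasis T = selfDualMatrix v)
    {Φ : V → V → ℝ} (hΦ : ∀ x y, Φ x y = (1/2) * ⟪(S ∘ₗ T - T ∘ₗ S) x, y⟫) :
    (fun i j => Φ (b i) (b j)) = selfDualMatrix (u ⨯₃ v) := by
  refine b.form_eq_selfDualMatrix (T := (-(1/2) : ℝ) • (S ∘ₗ T - T ∘ₗ S))
    (fun x y => by simp [hΦ, real_inner_smul_left]) ?_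
  rw [map_smul, toMatrix_commutator_of_toMatrix_eq_selfDualMatrix _ hS hT, ← cross_anticomm,
    selfDualMatrix_neg, smul_smul]
  norm_num

theorem OrthonormalBasis.form_commutator_comp_eq_selfDualMatrix
    (b : OrthonormalBasis (Fin 4) ℝ V) {S T J : V →ₗ[ℝ] V} {u v w : Fin 3 → ℝ}
    (hS : LinearMap.toMatrix b.toBasis b.toBasis S = selfDualMatrix u)
    (hT : LinearMap.toMatrix b.toBasis b.toBasis T = selfDualMatrix v)
    (hJ : LinearMap.toMatrix b.toBasis b.toBasis J = selfDualMatrix w) (hw : u ⨯₃ v ⬝ᵥ w = 0)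
    {Φ Ψ : V → V → ℝ} (hΦ : ∀ x y, Φ x y = (1/2) * ⟪(S ∘ₗ T - T ∘ₗ S) x, y⟫)
    (hΨ : ∀ x y, Ψ x y = -Φ (J x) y) :
    (fun i j => Ψ (b i) (b j)) = selfDualMatrix (u ⨯₃ v ⨯₃ w) := by
  refine b.form_eq_selfDualMatrix (T := ((1/2 : ℝ) • (S ∘ₗ T - T ∘ₗ S)) ∘ₗ J)
    (fun x y => by simp [hΨ, hΦ, real_inner_smul_left]) ?_
  rw [LinearMap.toMatrix_comp b.toBasis b.toBasis b.toBasis, map_smul,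
    toMatrix_commutator_of_toMatrix_eq_selfDualMatrix _ hS hT, hJ, ← cross_anticomm,
    selfDualMatrix_neg, smul_smul, smul_mul_assoc, neg_mul,
    selfDualMatrix_mul_of_dotProduct_eq_zero hw, ← selfDualMatrix_neg, cross_anticomm]
  norm_num

end InnerProductSpace

theorem stmt4_general {V : Type*} [NormedAddCommGroup V] [InnerProductSpace ℝ V]
    (o : Orientation ℝ V (Fin 4))
    (Jp Jm : V →ₗ[ℝ] V)
    (hJpsq : Jp ∘ₗ Jp = -LinearMap.id) (hJmsq : Jm ∘ₗ Jm = -LinearMap.id)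
    (hJpo : InducesOrientation o Jp) (hJmo : InducesOrientation o Jm)
    (p : ℝ) (hp : p = -(1/4) * LinearMap.trace ℝ V (Jp ∘ₗ Jm))
    (Φ Ψp Ψm : V → V → ℝ)
    (hΦ : ∀ x y, Φ x y = (1/2) * ⟪(Jp ∘ₗ Jm - Jm ∘ₗ Jp) x, y⟫)
    (hΨp : ∀ x y, Ψp x y = -Φ (Jp x) y) (hΨm : ∀ x y, Ψm x y = -Φ (Jm x) y) :
    ∀ b : OrthonormalBasis (Fin 4) ℝ V, b.toBasis.orientation = o →
      wedgeEval Φ Φ (b 0) (b 1) (b 2) (b 3) = 2 * (1 - p ^ 2) ∧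
      wedgeEval Ψp Ψp (b 0) (b 1) (b 2) (b 3) = 2 * (1 - p ^ 2) ∧
      wedgeEval Ψm Ψm (b 0) (b 1) (b 2) (b 3) = 2 * (1 - p ^ 2) ∧
      wedgeEval Φ Ψp (b 0) (b 1) (b 2) (b 3) = 0 ∧
      wedgeEval Φ Ψm (b 0) (b 1) (b 2) (b 3) = 0 ∧
      wedgeEval Ψp Ψm (b 0) (b 1) (b 2) (b 3) =
        p * wedgeEval Φ Φ (b 0) (b 1) (b 2) (b 3) := by
  intro b hb
  obtain ⟨a, ha, hA⟩ := hJpo.exists_toMatrix_eq_selfDualMatrix hJpsq b hb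
  obtain ⟨g, hg, hB⟩ := hJmo.exists_toMatrix_eq_selfDualMatrix hJmsq b hb
  have hp' : p = a ⬝ᵥ g := by
    rw [hp, trace_comp_of_toMatrix_eq_selfDualMatrix b.toBasis hA hB]
    ring
  set c := a ⨯₃ g
  have hca : c ⬝ᵥ a = 0 := by rw [dotProduct_comm, dot_self_cross]
  have hcg : c ⬝ᵥ g = 0 := by rw [dotProduct_comm, dot_cross_self]
  have hΦb := b.form_commutator_eq_selfDualMatrix hA hB hΦ
  have hΨpb := b.form_commutator_comp_eq_selfDualMatrix hA hB hA hca hΦ hΨp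
  have hΨmb := b.form_commutator_comp_eq_selfDualMatrix hA hB hB hcg hΦ hΨm
  have hcc : c ⬝ᵥ c = 1 - p ^ 2 := by
    rw [cross_dot_cross, ha, hg, hp', dotProduct_comm g a]
    ring
  have hΦΦ : wedgeEval Φ Φ (b 0) (b 1) (b 2) (b 3) = 2 * (1 - p ^ 2) := by
    rw [wedgeEval_eq_of_selfDualMatrix hΦb hΦb, hcc]
  refine ⟨hΦΦ, ?_, ?_, ?_, ?_, ?_⟩
  · rw [wedgeEval_eq_of_selfDualMatrix hΨpb hΨpb, cross_dot_cross, ha, hca, hcc]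
    ring
  · rw [wedgeEval_eq_of_selfDualMatrix hΨmb hΨmb, cross_dot_cross, hg, hcg, hcc]
    ring
  · rw [wedgeEval_eq_of_selfDualMatrix hΦb hΨpb, dot_self_cross, mul_zero]
  · rw [wedgeEval_eq_of_selfDualMatrix hΦb hΨmb, dot_self_cross, mul_zero]
  · rw [wedgeEval_eq_of_selfDualMatrix hΨpb hΨmb, hΦΦ, cross_dot_cross, hcg, hcc, hp']
    ring

/-- With `Φ(·,·) = (1/2)g([J₊,J₋]·,·)` and `Ψ±(·,·) = -Φ(J±·,·)` one has
`Φ∧Φ = Ψ₊∧Ψ₊ = Ψ₋∧Ψ₋ = 2(1-p²)·dv_g`, `Φ∧Ψ± = 0` and `Ψ₊∧Ψ₋ = p·Φ∧Φ`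
(4-forms being identified with multiples of `dv_g` by evaluation on a positively
oriented orthonormal basis). -/
theorem stmt4 {V : Type*} [NormedAddCommGroup V] [InnerProductSpace ℝ V]
    (hdim : Module.finrank ℝ V = 4) (o : Orientation ℝ V (Fin 4))
    (Jp Jm : V →ₗ[ℝ] V)
    (hJpsq : Jp ∘ₗ Jp = -LinearMap.id) (hJmsq : Jm ∘ₗ Jm = -LinearMap.id)
    (hJpg : ∀ x y : V, ⟪Jp x, Jp y⟫ = ⟪x, y⟫)
    (hJmg : ∀ x y : V, ⟪Jm x, Jm y⟫ = ⟪x, y⟫)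
    (hJpo : InducesOrientation o Jp) (hJmo : InducesOrientation o Jm)
    (p : ℝ) (hp : p = -(1/4) * LinearMap.trace ℝ V (Jp ∘ₗ Jm))
    (Φ Ψp Ψm : V → V → ℝ)
    (hΦ : ∀ x y, Φ x y = (1/2) * ⟪(Jp ∘ₗ Jm - Jm ∘ₗ Jp) x, y⟫)
    (hΨp : ∀ x y, Ψp x y = -Φ (Jp x) y) (hΨm : ∀ x y, Ψm x y = -Φ (Jm x) y) :
    ∀ b : OrthonormalBasis (Fin 4) ℝ V, b.toBasis.orientation = o →
      wedgeEval Φ Φ (b 0) (b 1) (b 2) (b 3) = 2 * (1 - p ^ 2) ∧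
      wedgeEval Ψp Ψp (b 0) (b 1) (b 2) (b 3) = 2 * (1 - p ^ 2) ∧
      wedgeEval Ψm Ψm (b 0) (b 1) (b 2) (b 3) = 2 * (1 - p ^ 2) ∧
      wedgeEval Φ Ψp (b 0) (b 1) (b 2) (b 3) = 0 ∧
      wedgeEval Φ Ψm (b 0) (b 1) (b 2) (b 3) = 0 ∧
      wedgeEval Ψp Ψm (b 0) (b 1) (b 2) (b 3) =
        p * wedgeEval Φ Φ (b 0) (b 1) (b 2) (b 3) :=
  stmt4_general o Jp Jm hJpsq hJmsq hJpo hJmo p hp Φ Ψp Ψm hΦ hΨp hΨm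
end
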